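/- Let p ≥ 1, 1 ≤ q < p, k ≥ 1, let α : Fin k → ℝ with α j > 0 and ∑ j, α j = 1, and let t : Fin k → (Fin p → ℝ) be group centers satisfying t j i = 0 for all j and all coordinates i > q. Let μ = ∑ j, α j • N(t j, I_p) be the Gaussian mixture on Fin p → ℝ with mean m, assume COV μ is invertible, and write B = (COV μ)⁻¹ and xᶜ_a = x a − m a. Then for all indices m', s ≤ q, COV4(μ)_{m' s} = (1/(p+2)) · [ ∑_{i ≤ q} ∑_{j ≤ q} B_{i j} · ∫ xᶜ_{m'} xᶜ_s xᶜ_i xᶜ_j dμ + (p − q) · ∫ xᶜ_{m'} xᶜ_s dμ ]. -/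

import Mathlib

open MeasureTheory ProbabilityTheory Matrix

/-- The mean vector of a measure on `Fin p → ℝ`. -/
noncomputable def meanVec {p : ℕ} (μ : Measure (Fin p → ℝ)) : Fin p → ℝ :=
  fun a => ∫ x, x a ∂μ

/-- The covariance matrix `COV(μ)` with entries `∫ (x a − m a)(x b − m b) dμ`. -/
noncomputable def COV {p : ℕ} (μ : Measure (Fin p → ℝ)) : Matrix (Fin p) (Fin p) ℝ :=
  Matrix.of fun a b => ∫ x, (x a - meanVec μ a) * (x b - meanVec μ b) ∂μ

/-- The fourth-order scatter matrix `COV4(μ)` with entries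
`(1/(p+2)) ∫ ((x−m)ᵀ (COV μ)⁻¹ (x−m)) (x a − m a)(x b − m b) dμ`. -/
noncomputable def COV4 {p : ℕ} (μ : Measure (Fin p → ℝ)) : Matrix (Fin p) (Fin p) ℝ :=
  Matrix.of fun a b =>
    (1 / ((p : ℝ) + 2)) *
      ∫ x, (dotProduct (fun i => x i - meanVec μ i)
          ((COV μ)⁻¹.mulVec fun i => x i - meanVec μ i)) *
        ((x a - meanVec μ a) * (x b - meanVec μ b)) ∂μ

/-- The product Gaussian measure `N(t, I_p)` on `Fin p → ℝ`. -/
noncomputable def gaussPi (p : ℕ) (t : Fin p → ℝ) : Measure (Fin p → ℝ) :=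
  Measure.pi fun i => gaussianReal (t i) 1

/-!
Within each Gaussian component the coordinates are independent, and every coordinate `i ≥ q`
is standard normal in all components. Hence under the mixture such a coordinate is centred and
factors out of every mixed moment: `E[x_i ^ r · F] = E[Z ^ r] · E[F]` when `F` does not involve
`x_i`, with `Z ~ N(0, 1)`. So `COV μ`, and with it `B = (COV μ)⁻¹`, is the identity outside the
upper-left `q × q` block, and in the quadratic form defining `COV4` the only surviving terms with
an index `≥ q` are `B_ii E[xᶜ_{m'} xᶜ_s (xᶜ_i)²] = E[xᶜ_{m'} xᶜ_s]`, one for each of the `p − q`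
tail coordinates.
-/

open scoped NNReal

theorem integrable_sub_pow_gaussianReal (a c : ℝ) (v : ℝ≥0) (n : ℕ) :
    Integrable (fun y => (y - a) ^ n) (gaussianReal c v) := by
  have h : Integrable (fun y : ℝ => y ^ n) (gaussianReal (c - a) v) :=
    integrable_pow_of_mem_interior_integrableExpSet (X := id)
      (by simp [integrableExpSet_id_gaussianReal]) n
  rwa [← gaussianReal_map_sub_const, integrable_map_measure (by fun_prop) (by fun_prop)] at h

theorem integral_sq_gaussianReal_zero (v : ℝ≥0) : ∫ y, y ^ 2 ∂gaussianReal 0 v = v := by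
  simpa using (variance_of_integral_eq_zero (X := fun y : ℝ => y) (μ := gaussianReal 0 v)
    aemeasurable_id' (by simp)).symm

namespace Matrix

variable {n R : Type*} [Fintype n] [DecidableEq n]

theorem inv_apply_eq_one_apply_of_col [CommRing R] {A : Matrix n n R} (hA : IsUnit A.det) {j : n}
    (hj : ∀ a, A a j = (1 : Matrix n n R) a j) (a : n) :
    A⁻¹ a j = (1 : Matrix n n R) a j :=
  calc A⁻¹ a j = (A⁻¹ * 1 : Matrix n n R) a j := by rw [Matrix.mul_one]
    _ = (A⁻¹ * A : Matrix n n R) a j := by simp only [mul_apply, hj]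
    _ = _ := by rw [nonsing_inv_mul A hA]

theorem inv_apply_eq_one_apply_of_row [CommRing R] {A : Matrix n n R} (hA : IsUnit A.det) {i : n}
    (hi : ∀ b, A i b = (1 : Matrix n n R) i b) (b : n) :
    A⁻¹ i b = (1 : Matrix n n R) i b :=
  calc A⁻¹ i b = (1 * A⁻¹ : Matrix n n R) i b := by rw [Matrix.one_mul]
    _ = (A * A⁻¹ : Matrix n n R) i b := by simp only [mul_apply, hi]
    _ = _ := by rw [mul_nonsing_inv A hA]

theorem sum_sum_mul_eq_sum_block_add_sum_diag [NonAssocSemiring R] (B : Matrix n n R)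
    (S : Finset n) (hB : ∀ i j, i ∉ S ∨ j ∉ S → B i j = (1 : Matrix n n R) i j)
    (g : n → n → R) :
    ∑ i, ∑ j, B i j * g i j = ∑ i ∈ S, ∑ j ∈ S, B i j * g i j + ∑ i ∈ Sᶜ, g i i := by
  rw [← Finset.sum_add_sum_compl S]
  congr 1
  · refine Finset.sum_congr rfl fun i hi => ?_
    have hoff : ∑ j ∈ Sᶜ, B i j * g i j = 0 := Finset.sum_eq_zero fun j hj => by
      have hij : i ≠ j := by rintro rfl; exact Finset.mem_compl.mp hj hi
      rw [hB i j (Or.inr (Finset.mem_compl.mp hj)), one_apply_ne hij, zero_mul]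
    rw [← Finset.sum_add_sum_compl S, hoff, add_zero]
  · refine Finset.sum_congr rfl fun i hi => ?_
    simp [hB i _ (Or.inl (Finset.mem_compl.mp hi)), one_apply]

end Matrix

theorem List.prod_map_eq_prod_pow_count {ι M : Type*} [Fintype ι] [DecidableEq ι] [CommMonoid M]
    (L : List ι) (f : ι → M) : (L.map f).prod = ∏ c, f c ^ L.count c := by
  rw [Finset.prod_list_map_count]
  exact Finset.prod_subset (Finset.subset_univ _) fun c _ hc => by
    rw [List.count_eq_zero_of_not_mem (mt List.mem_toFinset.mpr hc), pow_zero]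

theorem COV_comm {p : ℕ} (μ : Measure (Fin p → ℝ)) (a b : Fin p) : COV μ a b = COV μ b a := by
  simp only [COV, of_apply, mul_comm]

theorem COV4_apply_eq_sum_sum {p : ℕ} (μ : Measure (Fin p → ℝ)) (a b : Fin p)
    (hint : ∀ i j, Integrable (fun x => (x a - meanVec μ a) * (x b - meanVec μ b) *
      (x i - meanVec μ i) * (x j - meanVec μ j)) μ) :
    COV4 μ a b = (1 / ((p : ℝ) + 2)) * ∑ i, ∑ j, (COV μ)⁻¹ i j *
      ∫ x, (x a - meanVec μ a) * (x b - meanVec μ b) *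
        (x i - meanVec μ i) * (x j - meanVec μ j) ∂μ := by
  rw [COV4, of_apply]
  congr 1
  have hexpand : (fun x : Fin p → ℝ => (dotProduct (fun i => x i - meanVec μ i)
        ((COV μ)⁻¹.mulVec fun i => x i - meanVec μ i)) *
        ((x a - meanVec μ a) * (x b - meanVec μ b))) =
      fun x => ∑ i, ∑ j, (COV μ)⁻¹ i j * ((x a - meanVec μ a) * (x b - meanVec μ b) *
        (x i - meanVec μ i) * (x j - meanVec μ j)) := by
    funext x
    simp only [dotProduct, mulVec, Finset.sum_mul, Finset.mul_sum]
    exact Finset.sum_congr rfl fun i _ => Finset.sum_congr rfl fun j _ => by ring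
  rw [hexpand]
  refine (integral_finsetSum _ fun i _ => integrable_finsetSum _ fun j _ =>
    (hint i j).const_mul _).trans (Finset.sum_congr rfl fun i _ => ?_)
  refine (integral_finsetSum _ fun j _ => (hint i j).const_mul _).trans ?_
  simp only [integral_const_mul]

noncomputable def gaussMixture {k p : ℕ} (α : Fin k → ℝ) (t : Fin k → Fin p → ℝ) :
    Measure (Fin p → ℝ) :=
  ∑ j, ENNReal.ofReal (α j) • gaussPi p (t j)

noncomputable def centeredMoment {p : ℕ} (μ : Measure (Fin p → ℝ)) (w : Fin p → ℝ)
    (L : List (Fin p)) : ℝ :=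
  ∫ x, (L.map fun c => x c - w c).prod ∂μ

section GaussMixture

variable {k p : ℕ} {α : Fin k → ℝ} {t : Fin k → Fin p → ℝ}

theorem isProbabilityMeasure_gaussMixture (hα : ∀ j, 0 ≤ α j) (hsum : ∑ j, α j = 1) :
    IsProbabilityMeasure (gaussMixture α t) :=
  ⟨by simp [gaussMixture, gaussPi, ← ENNReal.ofReal_sum_of_nonneg fun j _ => hα j, hsum]⟩

theorem integrable_prod_gaussMixture {f : Fin p → ℝ → ℝ}
    (hf : ∀ j c, Integrable (f c) (gaussianReal (t j c) 1)) :
    Integrable (fun x => ∏ c, f c (x c)) (gaussMixture α t) := by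
  rw [gaussMixture, integrable_finsetSum_measure]
  exact fun j _ => (Integrable.fintype_prod (hf j)).smul_measure ENNReal.ofReal_ne_top

theorem integral_prod_gaussMixture (hα : ∀ j, 0 ≤ α j) {f : Fin p → ℝ → ℝ}
    (hf : ∀ j c, Integrable (f c) (gaussianReal (t j c) 1)) :
    ∫ x, ∏ c, f c (x c) ∂gaussMixture α t =
      ∑ j, α j * ∏ c, ∫ y, f c y ∂gaussianReal (t j c) 1 := by
  unfold gaussMixture gaussPi
  rw [integral_finsetSum_measure fun j _ =>
    (Integrable.fintype_prod (hf j)).smul_measure ENNReal.ofReal_ne_top]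
  refine Finset.sum_congr rfl fun j _ => ?_
  rw [integral_smul_measure, ENNReal.toReal_ofReal (hα j), smul_eq_mul,
    integral_fintype_prod_eq_prod]

theorem integrable_prod_map_sub_gaussMixture (w : Fin p → ℝ) (L : List (Fin p)) :
    Integrable (fun x => (L.map fun c => x c - w c).prod) (gaussMixture α t) := by
  simp_rw [List.prod_map_eq_prod_pow_count]
  exact integrable_prod_gaussMixture (f := fun c y => (y - w c) ^ L.count c)
    fun j c => integrable_sub_pow_gaussianReal _ _ _ _

theorem centeredMoment_gaussMixture_append_replicate (hα : ∀ j, 0 ≤ α j) {w : Fin p → ℝ}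
    {i : Fin p} (hti : ∀ j, t j i = 0) (hwi : w i = 0) {L : List (Fin p)} (hiL : i ∉ L)
    (r : ℕ) :
    centeredMoment (gaussMixture α t) w (L ++ List.replicate r i) =
      (∫ y, y ^ r ∂gaussianReal 0 1) * centeredMoment (gaussMixture α t) w L := by
  simp only [centeredMoment, List.prod_map_eq_prod_pow_count]
  rw [integral_prod_gaussMixture hα
      (f := fun c y => (y - w c) ^ (L ++ List.replicate r i).count c)
      fun j c => integrable_sub_pow_gaussianReal _ _ _ _,
    integral_prod_gaussMixture hα (f := fun c y => (y - w c) ^ L.count c)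
      fun j c => integrable_sub_pow_gaussianReal _ _ _ _, Finset.mul_sum]
  refine Finset.sum_congr rfl fun j _ => ?_
  have hrest : ∀ c ∈ ({i}ᶜ : Finset (Fin p)),
      ∫ y, (y - w c) ^ (L ++ List.replicate r i).count c ∂gaussianReal (t j c) 1 =
        ∫ y, (y - w c) ^ L.count c ∂gaussianReal (t j c) 1 := fun c hc => by
    have hci : i ≠ c := fun h => by simp [h] at hc
    simp [List.count_replicate, hci]
  rw [Fintype.prod_eq_mul_prod_compl i, Fintype.prod_eq_mul_prod_compl i,
    Finset.prod_congr rfl hrest]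
  simp only [hti j, hwi, sub_zero, List.count_append, List.count_replicate_self,
    List.count_eq_zero_of_not_mem hiL, zero_add, pow_zero, integral_const, probReal_univ,
    smul_eq_mul, mul_one]
  ring

theorem integrable_centered_mul_mul_mul_gaussMixture (w : Fin p → ℝ) (a b c d : Fin p) :
    Integrable (fun x => (x a - w a) * (x b - w b) * (x c - w c) * (x d - w d))
      (gaussMixture α t) := by
  simpa [mul_assoc] using integrable_prod_map_sub_gaussMixture (α := α) (t := t) w [a, b, c, d]

theorem meanVec_gaussMixture_of_tail (hα : ∀ j, 0 ≤ α j) {i : Fin p} (hti : ∀ j, t j i = 0) :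
    meanVec (gaussMixture α t) i = 0 := by
  simpa [centeredMoment, meanVec] using
    centeredMoment_gaussMixture_append_replicate hα (w := 0) hti rfl List.not_mem_nil 1

theorem COV_gaussMixture_of_tail (hα : ∀ j, 0 ≤ α j) (hsum : ∑ j, α j = 1) {b : Fin p}
    (htb : ∀ j, t j b = 0) (a : Fin p) :
    COV (gaussMixture α t) a b = (1 : Matrix (Fin p) (Fin p) ℝ) a b := by
  have := isProbabilityMeasure_gaussMixture (t := t) hα hsum
  have hvb := meanVec_gaussMixture_of_tail hα htb
  have hcov : COV (gaussMixture α t) a b =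
      centeredMoment (gaussMixture α t) (meanVec (gaussMixture α t)) [a, b] := by
    simp [COV, centeredMoment]
  rcases eq_or_ne a b with rfl | hab
  · have := centeredMoment_gaussMixture_append_replicate hα htb hvb List.not_mem_nil 2
    rw [hcov, one_apply_eq]
    exact this.trans (by simp [integral_sq_gaussianReal_zero, centeredMoment])
  · have := centeredMoment_gaussMixture_append_replicate hα htb hvb
      (by simpa using hab.symm : b ∉ [a]) 1
    rw [hcov, one_apply_ne hab]
    exact this.trans (by simp)

theorem integral_centered_mul_sq_gaussMixture_of_tail (hα : ∀ j, 0 ≤ α j) {i : Fin p}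
    (hti : ∀ j, t j i = 0) {a b : Fin p} (hai : a ≠ i) (hbi : b ≠ i) :
    ∫ x, (x a - meanVec (gaussMixture α t) a) * (x b - meanVec (gaussMixture α t) b) *
        (x i - meanVec (gaussMixture α t) i) * (x i - meanVec (gaussMixture α t) i)
        ∂gaussMixture α t =
      ∫ x, (x a - meanVec (gaussMixture α t) a) * (x b - meanVec (gaussMixture α t) b)
        ∂gaussMixture α t := by
  have := centeredMoment_gaussMixture_append_replicate hα hti
    (meanVec_gaussMixture_of_tail hα hti) (by simp [hai.symm, hbi.symm] : i ∉ [a, b]) 2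
  simpa [centeredMoment, integral_sq_gaussianReal_zero, mul_assoc] using this

end GaussMixture

theorem cov4_gaussian_mixture_upper_block_general (p q k : ℕ) (hqp : q < p)
    (α : Fin k → ℝ) (hα : ∀ j, 0 < α j) (hsum : ∑ j, α j = 1)
    (t : Fin k → Fin p → ℝ)
    (ht : ∀ j, ∀ i : Fin p, q ≤ (i : ℕ) → t j i = 0)
    (μ : Measure (Fin p → ℝ))
    (hμ : μ = ∑ j, ENNReal.ofReal (α j) • gaussPi p (t j))
    (hinv : IsUnit (COV μ)) :
    ∀ m' s : Fin p, (m' : ℕ) < q → (s : ℕ) < q →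
      COV4 μ m' s = (1 / ((p : ℝ) + 2)) *
        ((∑ i ∈ Finset.univ.filter (fun i : Fin p => (i : ℕ) < q),
            ∑ j ∈ Finset.univ.filter (fun j : Fin p => (j : ℕ) < q),
              (COV μ)⁻¹ i j *
                ∫ x, (x m' - meanVec μ m') * (x s - meanVec μ s) *
                  (x i - meanVec μ i) * (x j - meanVec μ j) ∂μ) +
          ((p : ℝ) - (q : ℝ)) *
            ∫ x, (x m' - meanVec μ m') * (x s - meanVec μ s) ∂μ) := by
  intro m' s hm' hs
  obtain rfl : μ = gaussMixture α t := hμ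
  have hα₀ : ∀ j, 0 ≤ α j := fun j => (hα j).le
  set S := Finset.univ.filter fun i : Fin p => (i : ℕ) < q
  have htail : ∀ i ∉ S, ∀ j, t j i = 0 := fun i hi j => ht j i (by simpa [S] using hi)
  have hdet := (isUnit_iff_isUnit_det _).mp hinv
  have hB : ∀ i j, i ∉ S ∨ j ∉ S →
      (COV (gaussMixture α t))⁻¹ i j = (1 : Matrix (Fin p) (Fin p) ℝ) i j := by
    rintro i j (hi | hj)
    · refine inv_apply_eq_one_apply_of_row hdet (fun b => ?_) j
      rw [COV_comm, COV_gaussMixture_of_tail hα₀ hsum (htail i hi), one_apply, one_apply]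
      exact if_congr eq_comm rfl rfl
    · exact inv_apply_eq_one_apply_of_col hdet
        (COV_gaussMixture_of_tail hα₀ hsum (htail j hj)) i
  set v := meanVec (gaussMixture α t)
  have hdiag : ∀ i ∈ Sᶜ,
      ∫ x, (x m' - v m') * (x s - v s) * (x i - v i) * (x i - v i) ∂gaussMixture α t =
        ∫ x, (x m' - v m') * (x s - v s) ∂gaussMixture α t := fun i hi =>
    integral_centered_mul_sq_gaussMixture_of_tail hα₀ (htail i (Finset.mem_compl.mp hi))
      (by rintro rfl; simp [S] at hi; omega) (by rintro rfl; simp [S] at hi; omega)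
  rw [COV4_apply_eq_sum_sum _ _ _ (integrable_centered_mul_mul_mul_gaussMixture _ _ _),
    sum_sum_mul_eq_sum_block_add_sum_diag _ S hB, Finset.sum_congr rfl hdiag, Finset.sum_const,
    Finset.card_compl, Fintype.card_fin, Fin.card_filter_val_lt, min_eq_right hqp.le,
    nsmul_eq_mul, Nat.cast_sub hqp.le]

/-- Expression for the upper-left block entries of `COV4(μ)` of a Gaussian mixture whose
group centers vanish on the last `p − q` coordinates: for indices `m'`, `s` among the first
`q` coordinates,
`COV4(μ)_{m' s} = (1/(p+2)) [ ∑_{i,j ≤ q} B_{i j} E[xᶜ_{m'} xᶜ_s xᶜ_i xᶜ_j]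
  + (p − q) E[xᶜ_{m'} xᶜ_s] ]` with `B = (COV μ)⁻¹`. -/
theorem cov4_gaussian_mixture_upper_block (p q k : ℕ) (hq1 : 1 ≤ q) (hqp : q < p)
    (hk : 1 ≤ k)
    (α : Fin k → ℝ) (hα : ∀ j, 0 < α j) (hsum : ∑ j, α j = 1)
    (t : Fin k → Fin p → ℝ)
    (ht : ∀ j, ∀ i : Fin p, q ≤ (i : ℕ) → t j i = 0)
    (μ : Measure (Fin p → ℝ))
    (hμ : μ = ∑ j, ENNReal.ofReal (α j) • gaussPi p (t j))
    (hinv : IsUnit (COV μ)) :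
    ∀ m' s : Fin p, (m' : ℕ) < q → (s : ℕ) < q →
      COV4 μ m' s = (1 / ((p : ℝ) + 2)) *
        ((∑ i ∈ Finset.univ.filter (fun i : Fin p => (i : ℕ) < q),
            ∑ j ∈ Finset.univ.filter (fun j : Fin p => (j : ℕ) < q),
              (COV μ)⁻¹ i j *
                ∫ x, (x m' - meanVec μ m') * (x s - meanVec μ s) *
                  (x i - meanVec μ i) * (x j - meanVec μ j) ∂μ) +
          ((p : ℝ) - (q : ℝ)) *
            ∫ x, (x m' - meanVec μ m') * (x s - meanVec μ s) ∂μ) :=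
  cov4_gaussian_mixture_upper_block_general p q k hqp α hα hsum t ht μ hμ hinv
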